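/- Division lemma: let k ≥ 2 and let q₁, …, q_α (α ≥ 2) be integers. Let m = maxᵢ|qᵢ| = |q_j| and assume (A) |Σᵢ qᵢ| ≠ m, and (B) Σ_{i ≠ j} |qᵢ| ≤ m^{(k−1)/k} / (2^k α^{(k−1)/k}). Then |Σᵢ qᵢ^k − (Σᵢ qᵢ)^k| ≥ m^{k−1}/2. -/
import Mathlib

open Finset

private lemma aux_pow_gap (k : ℕ) (hk : 1 ≤ k) {a b : ℤ} (ha : 0 ≤ a) (hb : 0 ≤ b)
    (hne : a ≠ b) : a ^ (k - 1) ≤ |a ^ k - b ^ k| := by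
  obtain ⟨n, rfl⟩ : ∃ n, k = n + 1 := ⟨k - 1, (Nat.succ_pred_eq_of_pos hk).symm⟩
  simp only [Nat.add_sub_cancel]
  rcases hne.lt_or_gt with h | h
  · -- a < b
    have h1 : a ^ n ≤ b ^ n := pow_le_pow_left₀ ha h.le n
    have h2 : a * a ^ n ≤ a * b ^ n := mul_le_mul_of_nonneg_left h1 ha
    have h3 : 0 ≤ b ^ n := pow_nonneg hb n
    rw [abs_sub_comm, abs_of_nonneg (by nlinarith [pow_succ b n, pow_succ a n])]
    nlinarith [pow_succ b n, pow_succ a n]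
  · -- b < a
    have h1 : b ^ n ≤ a ^ n := pow_le_pow_left₀ hb h.le n
    have h2 : b * b ^ n ≤ b * a ^ n := mul_le_mul_of_nonneg_left h1 hb
    have h3 : 0 ≤ a ^ n := pow_nonneg ha n
    rw [abs_of_nonneg (by nlinarith [pow_succ b n, pow_succ a n])]
    nlinarith [pow_succ b n, pow_succ a n]

private lemma aux_sum_pow {ι : Type*} (s : Finset ι) (f : ι → ℝ) (hf : ∀ i ∈ s, 0 ≤ f i)
    (k : ℕ) (hk : 1 ≤ k) : ∑ i ∈ s, f i ^ k ≤ (∑ i ∈ s, f i) ^ k := by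
  obtain ⟨n, rfl⟩ : ∃ n, k = n + 1 := ⟨k - 1, (Nat.succ_pred_eq_of_pos hk).symm⟩
  have hS : 0 ≤ ∑ i ∈ s, f i := Finset.sum_nonneg hf
  calc ∑ i ∈ s, f i ^ (n + 1) ≤ ∑ i ∈ s, f i * (∑ i ∈ s, f i) ^ n := by
        refine Finset.sum_le_sum fun i hi => ?_
        rw [pow_succ']
        exact mul_le_mul_of_nonneg_left
          (pow_le_pow_left₀ (hf i hi) (Finset.single_le_sum hf hi) n) (hf i hi)
    _ = (∑ i ∈ s, f i) ^ (n + 1) := by rw [← Finset.sum_mul, pow_succ']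

theorem division_lemma (k α : ℕ) (hk : 2 ≤ k) (hα : 2 ≤ α)
    (q : Fin α → ℤ) (j : Fin α) (m : ℤ)
    (hm : m = |q j|) (hmax : ∀ i, |q i| ≤ m)
    (hA : |∑ i, q i| ≠ m)
    (hB : (∑ i ∈ Finset.univ.erase j, (|q i| : ℝ)) ≤
      (m : ℝ) ^ (((k : ℝ) - 1) / k) / (2 ^ k * (α : ℝ) ^ (((k : ℝ) - 1) / k))) :
    (m : ℝ) ^ (k - 1) / 2 ≤ |(∑ i, (q i) ^ k - (∑ i, q i) ^ k : ℤ)| := by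
  have hm0 : (0 : ℤ) ≤ m := hm ▸ abs_nonneg _
  set S : ℤ := ∑ i, q i with hS
  -- key integer estimate
  have hkey : m ^ (k - 1) ≤ |(q j) ^ k - S ^ k| := by
    have h1 : |m ^ k - |S| ^ k| ≤ |(q j) ^ k - S ^ k| := by
      have := abs_abs_sub_abs_le_abs_sub ((q j) ^ k) (S ^ k)
      rwa [abs_pow, abs_pow, ← hm] at this
    exact le_trans (aux_pow_gap k (by omega) hm0 (abs_nonneg S) (fun h => hA h.symm)) h1
  -- decompose the sum
  have hdecomp : ∑ i, (q i) ^ k = (∑ i ∈ Finset.univ.erase j, (q i) ^ k) + (q j) ^ k :=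
    (Finset.sum_erase_add _ _ (Finset.mem_univ j)).symm
  -- bound the tail in ℝ
  set B : ℝ := ∑ i ∈ Finset.univ.erase j, (|q i| : ℝ) with hBdef
  have hB0 : 0 ≤ B := Finset.sum_nonneg fun i _ => by positivity
  have hα0 : (0 : ℝ) < (α : ℝ) := by positivity
  have hmR : (0 : ℝ) ≤ (m : ℝ) := by exact_mod_cast hm0
  have hk0 : (0 : ℝ) < (k : ℝ) := by positivity
  have hcast : ((k : ℝ) - 1) = ((k - 1 : ℕ) : ℝ) := by
    have : (1 : ℕ) ≤ k := by omega
    push_cast [this]; ring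
  have hrm : ((m : ℝ) ^ (((k : ℝ) - 1) / k)) ^ k = (m : ℝ) ^ (k - 1) := by
    rw [← Real.rpow_natCast ((m : ℝ) ^ (((k : ℝ) - 1) / k)) k, ← Real.rpow_mul hmR,
      div_mul_cancel₀ _ (ne_of_gt hk0), hcast, Real.rpow_natCast]
  have hrα : ((α : ℝ) ^ (((k : ℝ) - 1) / k)) ^ k = (α : ℝ) ^ (k - 1) := by
    rw [← Real.rpow_natCast ((α : ℝ) ^ (((k : ℝ) - 1) / k)) k, ← Real.rpow_mul hα0.le,
      div_mul_cancel₀ _ (ne_of_gt hk0), hcast, Real.rpow_natCast]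
  have hBk : B ^ k ≤ (m : ℝ) ^ (k - 1) / (2 ^ (k * k) * (α : ℝ) ^ (k - 1)) := by
    calc B ^ k ≤ ((m : ℝ) ^ (((k : ℝ) - 1) / k) / (2 ^ k * (α : ℝ) ^ (((k : ℝ) - 1) / k))) ^ k :=
          pow_le_pow_left₀ hB0 hB k
      _ = (m : ℝ) ^ (k - 1) / (2 ^ (k * k) * (α : ℝ) ^ (k - 1)) := by
          rw [div_pow, mul_pow, hrm, hrα, ← pow_mul]
  have hden : (2 : ℝ) ≤ 2 ^ (k * k) * (α : ℝ) ^ (k - 1) := by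
    have h1 : (2 : ℝ) ≤ 2 ^ (k * k) := by
      calc (2 : ℝ) = 2 ^ 1 := (pow_one 2).symm
        _ ≤ 2 ^ (k * k) := pow_le_pow_right₀ one_le_two (by nlinarith)
    have h2 : (1 : ℝ) ≤ (α : ℝ) ^ (k - 1) := one_le_pow₀ (by exact_mod_cast (by omega : 1 ≤ α))
    nlinarith
  have hmk0 : (0 : ℝ) ≤ (m : ℝ) ^ (k - 1) := by positivity
  have hBk2 : B ^ k ≤ (m : ℝ) ^ (k - 1) / 2 :=
    hBk.trans (div_le_div_of_nonneg_left hmk0 two_pos hden)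
  have hT : (∑ i ∈ Finset.univ.erase j, (|q i| : ℝ) ^ k) ≤ (m : ℝ) ^ (k - 1) / 2 :=
    le_trans (aux_sum_pow _ _ (fun i _ => by positivity) k (by omega)) hBk2
  -- integer-level triangle inequality
  have hZ : (m ^ (k - 1) : ℤ) - (∑ i ∈ Finset.univ.erase j, |q i| ^ k) ≤
      |∑ i, (q i) ^ k - S ^ k| := by
    have heq : (∑ i, (q i) ^ k - S ^ k : ℤ)
        = ((q j) ^ k - S ^ k) + (∑ i ∈ Finset.univ.erase j, (q i) ^ k) := by
      rw [hdecomp]; ring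
    have h5 := abs_add_le (((q j) ^ k - S ^ k : ℤ) + (∑ i ∈ Finset.univ.erase j, (q i) ^ k))
      (-(∑ i ∈ Finset.univ.erase j, (q i) ^ k))
    rw [abs_neg] at h5
    have h6 : (((q j) ^ k - S ^ k : ℤ) + (∑ i ∈ Finset.univ.erase j, (q i) ^ k))
        + (-(∑ i ∈ Finset.univ.erase j, (q i) ^ k)) = (q j) ^ k - S ^ k := by ring
    rw [h6] at h5
    have h2 : |(∑ i ∈ Finset.univ.erase j, (q i) ^ k : ℤ)| ≤
        ∑ i ∈ Finset.univ.erase j, |q i| ^ k := by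
      refine le_trans (Finset.abs_sum_le_sum_abs _ _) ?_
      exact le_of_eq (Finset.sum_congr rfl fun i _ => (abs_pow _ _))
    rw [heq]
    linarith [hkey]
  have hZR : ((m : ℝ) ^ (k - 1)) - (∑ i ∈ Finset.univ.erase j, (|q i| : ℝ) ^ k) ≤
      (|∑ i, (q i) ^ k - S ^ k| : ℤ) := by exact_mod_cast hZ
  linarith [hT, hZR]
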